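/- Let Λ be an open subgroup of finite index of (K^×,×), let d ≥ 1, and let S be a closed subset of K^d × (K^d ∖ {0}) which is Λ-conical in the second factor, i.e. (x,λξ) ∈ S whenever (x,ξ) ∈ S and λ ∈ Λ. Then there exists a distribution u ∈ S'(K^d) such that WF_Λ(u) = S. -/

import Mathlib

open MeasureTheory Filter Topology
open scoped BigOperators Classical

noncomputable section

/-- Axiomatization of a non-archimedean local field: a topological field equipped with a
surjective discrete valuation `ord : K → ℤ ∪ {∞}` whose closed balls are compact open and
form a neighborhood basis at every point. -/
class NALocalField (K : Type) [Field K] [TopologicalSpace K] where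
  ord : K → WithTop ℤ
  ord_eq_top_iff : ∀ x : K, ord x = ⊤ ↔ x = 0
  ord_mul : ∀ x y : K, ord (x * y) = ord x + ord y
  ord_add : ∀ x y : K, min (ord x) (ord y) ≤ ord (x + y)
  ord_surjective : ∀ m : ℤ, ∃ x : K, ord x = (m : WithTop ℤ)
  isOpen_ball : ∀ m : ℤ, IsOpen {x : K | (m : WithTop ℤ) ≤ ord x}
  isCompact_ball : ∀ m : ℤ, IsCompact {x : K | (m : WithTop ℤ) ≤ ord x}
  nhds_basis : ∀ x : K, (nhds x).HasBasis (fun _ : ℤ => True)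
      (fun m => {y : K | (m : WithTop ℤ) ≤ ord (y - x)})

variable {K : Type} [Field K] [TopologicalSpace K] [IsTopologicalRing K] [NALocalField K]

/-- The minimum of the valuations of the coordinates of a vector; `|v| = q^{-ordVec v}`. -/
def ordVec {ι : Type} [Fintype ι] (v : ι → K) : WithTop ℤ :=
  Finset.univ.inf fun i => NALocalField.ord (v i)

/-- The ball of valuative radius `r` around `x` in `K^ι`. -/
def pball {ι : Type} [Fintype ι] (x : ι → K) (r : ℤ) : Set (ι → K) :=
  {y | (r : WithTop ℤ) ≤ ordVec (x - y)}

section SB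
variable {α : Type} [TopologicalSpace α]

/-- Schwartz–Bruhat functions on a subset `X ⊆ α`: locally constant compactly supported
`ℂ`-valued functions on `X` (as functions on the subtype). -/
def IsSB (X : Set α) (f : X → ℂ) : Prop :=
  IsLocallyConstant f ∧ HasCompactSupport f

/-- A distribution on `X`: a functional which is `ℂ`-linear on Schwartz–Bruhat functions. -/
def IsDistribution (X : Set α) (u : (X → ℂ) → ℂ) : Prop :=
  (∀ (c : ℂ) (f : X → ℂ), IsSB X f → u (c • f) = c * u f) ∧
  (∀ f g : X → ℂ, IsSB X f → IsSB X g → u (f + g) = u f + u g)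

/-- Schwartz–Bruhat functions on an open subset `U ⊆ α`, realized as locally constant
compactly supported functions on `α` whose support is contained in `U`. -/
def IsSBOn (U : Set α) (f : α → ℂ) : Prop :=
  IsLocallyConstant f ∧ HasCompactSupport f ∧ tsupport f ⊆ U

/-- A distribution on an open set `U ⊆ α`, in the ambient-function realization. -/
def IsDistributionOn (U : Set α) (u : (α → ℂ) → ℂ) : Prop :=
  (∀ (c : ℂ) (f : α → ℂ), IsSBOn U f → u (c • f) = c * u f) ∧
  (∀ f g : α → ℂ, IsSBOn U f → IsSBOn U g → u (f + g) = u f + u g)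

end SB

/-- `ψ` is an additive character of `K` which is trivial on the maximal ideal and
nontrivial on the ring of integers. -/
def IsStandardChar (ψ : AddChar K ℂ) : Prop :=
  (∀ x : K, (1 : WithTop ℤ) ≤ NALocalField.ord x → ψ x = 1) ∧
  (∃ x : K, (0 : WithTop ℤ) ≤ NALocalField.ord x ∧ ψ x ≠ 1)

/-- `Λ` is an open subgroup of finite index of `(K^×, ×)`. -/
structure IsOpenFinIndexSubgroup (Λ : Set K) : Prop where
  one_mem : (1 : K) ∈ Λ
  mul_mem : ∀ a ∈ Λ, ∀ b ∈ Λ, a * b ∈ Λ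
  inv_mem : ∀ a ∈ Λ, a⁻¹ ∈ Λ
  ne_zero : ∀ a ∈ Λ, a ≠ 0
  isOpen : IsOpen Λ
  finiteIndex : ∃ T : Finset K, ∀ x : K, x ≠ 0 → ∃ t ∈ T, t * x ∈ Λ

section Fourier
variable (ψ : AddChar K ℂ)

/-- `F(φu)(ξ) = u(x ↦ φ(x) ψ(x·ξ))` for a functional `u`. -/
def FTrans {ι : Type} [Fintype ι] (u : ((ι → K) → ℂ) → ℂ) (φ : (ι → K) → ℂ)
    (ξ : ι → K) : ℂ :=
  u fun x => φ x * ψ (∑ i, x i * ξ i)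

/-- `Λ`-microlocal smoothness of a distribution on an open subset `U ⊆ K^ι` at a point
`(x₀, ξ₀)`: there are neighborhoods `U₀ ∋ x₀` and `V₀ ∋ ξ₀` such that for every
Schwartz–Bruhat `φ` supported in `U₀` there is `N ∈ ℤ` with `F(φu)(λξ) = 0` for all
`ξ ∈ V₀` and all `λ ∈ Λ` with `ord λ < N`. -/
def LamSmoothAt (Λ : Set K) {ι : Type} [Fintype ι] (U : Set (ι → K))
    (u : ((ι → K) → ℂ) → ℂ) (x₀ ξ₀ : ι → K) : Prop :=
  ∃ U₀ V₀ : Set (ι → K), IsOpen U₀ ∧ IsOpen V₀ ∧ x₀ ∈ U₀ ∧ ξ₀ ∈ V₀ ∧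
    ∀ φ : (ι → K) → ℂ, IsSBOn U φ → tsupport φ ⊆ U₀ →
      ∃ N : ℤ, ∀ lam ∈ Λ, NALocalField.ord lam < (N : WithTop ℤ) →
        ∀ ξ ∈ V₀, FTrans ψ u φ (fun i => lam * ξ i) = 0

/-- The `Λ`-wave front set of a distribution on an open subset `U ⊆ K^ι`: the complement
in `U × (K^ι ∖ {0})` of the set of `Λ`-smooth points. -/
def WFset (Λ : Set K) {ι : Type} [Fintype ι] (U : Set (ι → K))
    (u : ((ι → K) → ℂ) → ℂ) : Set ((ι → K) × (ι → K)) :=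
  {p | p.1 ∈ U ∧ p.2 ≠ 0 ∧ ¬ LamSmoothAt ψ Λ U u p.1 p.2}

end Fourier

/-!
Enumerate `S` by a sequence `(xₖ, ξₖ)` that comes back arbitrarily late near every point of `S`,
choose `λₖ ∈ Λ` so that the valuations `mₖ` of the frequencies `λₖξₖ` decrease strictly (and at
least like `-2k`), and put `u(f) = ∑ₖ 2⁻ᵏ ⨍_{B(xₖ, k)} f(x) ψ(-x·λₖξₖ) dx`.

If `φ` is invariant under translation by the ball of radius `R`, the `k`-th term of `F(φu)(ζ)`
vanishes as soon as `ord(ζ - λₖξₖ) ≤ -max(R, k)`, because a function with period `t` integrates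
to zero against a character with `ψ(t·ζ) ≠ 1`. At `ζ = λⱼξⱼ` with `(xⱼ, ξⱼ)` close to a point of
`S`, the distinct valuations kill every term but the `j`-th, which equals `2⁻ʲ`: so `S ⊆ WF_Λ(u)`.
Conversely, a term surviving at `λξ` with `ord λ ≪ 0` has `ord(λξ) = mₖ` for a large `k`, which
puts `(xₖ, (λₖ/λ)ξₖ) ∈ S` close to `(x, ξ)`; so the points off the closed cone `S` are smooth.
-/

namespace NALocalField

variable {K : Type} [Field K] [TopologicalSpace K] [NALocalField K]

lemma ord_zero : ord (0 : K) = ⊤ := (ord_eq_top_iff 0).2 rfl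

lemma ord_ne_top {x : K} (hx : x ≠ 0) : ord x ≠ ⊤ := fun h => hx ((ord_eq_top_iff x).1 h)

lemma exists_ord_eq_coe {x : K} (hx : x ≠ 0) : ∃ m : ℤ, ord x = m :=
  WithTop.ne_top_iff_exists.1 (ord_ne_top hx) |>.imp fun _ h => h.symm

lemma ord_one : ord (1 : K) = 0 := by
  obtain ⟨m, hm⟩ := exists_ord_eq_coe (one_ne_zero : (1 : K) ≠ 0)
  have h := ord_mul (1 : K) 1
  rw [one_mul, hm, ← WithTop.coe_add, WithTop.coe_inj] at h
  rw [hm, show m = 0 by omega]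
  rfl

lemma ord_inv {x : K} {m : ℤ} (hm : ord x = m) : ord x⁻¹ = (-m : ℤ) := by
  have hx : x ≠ 0 := fun h => by simp [h, ord_zero] at hm
  obtain ⟨n, hn⟩ := exists_ord_eq_coe (inv_ne_zero hx)
  have h := ord_mul x x⁻¹
  rw [mul_inv_cancel₀ hx, ord_one, hm, hn, ← WithTop.coe_add, eq_comm, WithTop.coe_eq_zero] at h
  rw [hn, WithTop.coe_inj]
  omega

lemma ord_neg (x : K) : ord (-x) = ord x := by
  obtain ⟨m, hm⟩ := exists_ord_eq_coe (neg_ne_zero.2 (one_ne_zero : (1 : K) ≠ 0))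
  have h := ord_mul (-1 : K) (-1)
  rw [neg_mul_neg, one_mul, ord_one, hm, ← WithTop.coe_add, eq_comm, WithTop.coe_eq_zero] at h
  rw [neg_eq_neg_one_mul, ord_mul, hm, show m = 0 by omega, WithTop.coe_zero, zero_add]

lemma ord_sub_comm (x y : K) : ord (x - y) = ord (y - x) := by
  rw [← ord_neg, neg_sub]

lemma le_ord_add {x y : K} {c : WithTop ℤ} (hx : c ≤ ord x) (hy : c ≤ ord y) :
    c ≤ ord (x + y) :=
  (le_min hx hy).trans (ord_add x y)

lemma le_ord_sub {x y : K} {c : WithTop ℤ} (hx : c ≤ ord x) (hy : c ≤ ord y) :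
    c ≤ ord (x - y) := by
  rw [sub_eq_add_neg]
  exact le_ord_add hx (by rwa [ord_neg])

lemma ord_add_eq_left {x y : K} (h : ord x < ord y) : ord (x + y) = ord x := by
  refine le_antisymm ?_ (min_eq_left h.le ▸ ord_add x y)
  have h' := ord_add (x + y) (-y)
  rw [add_neg_cancel_right, ord_neg] at h'
  exact (min_le_iff.1 h').resolve_right fun hy => (h.trans_le hy).false

lemma ord_natCast_nonneg (n : ℕ) : 0 ≤ ord (n : K) := by
  induction n with
  | zero => simp [ord_zero]
  | succ n ih => exact Nat.cast_succ (R := K) n ▸ le_ord_add ih ord_one.ge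

end NALocalField

section Ultrametric

open NALocalField

variable {K : Type} [Field K] [TopologicalSpace K] [NALocalField K] {ι : Type} [Fintype ι]

lemma ordVec_le (v : ι → K) (i : ι) : ordVec v ≤ ord (v i) := by
  unfold ordVec
  exact Finset.inf_le (Finset.mem_univ i)

lemma le_ordVec_iff {v : ι → K} {c : WithTop ℤ} : c ≤ ordVec v ↔ ∀ i, c ≤ ord (v i) := by
  simp [ordVec, Finset.le_inf_iff]

lemma exists_ordVec_eq [Nonempty ι] (v : ι → K) : ∃ i, ordVec v = ord (v i) := by
  obtain ⟨i, -, hi⟩ := Finset.exists_mem_eq_inf Finset.univ Finset.univ_nonempty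
    fun i => ord (v i)
  exact ⟨i, hi⟩

lemma ordVec_eq_top_iff {v : ι → K} : ordVec v = ⊤ ↔ v = 0 := by
  rw [← top_le_iff, le_ordVec_iff, funext_iff]
  simp only [top_le_iff, ord_eq_top_iff, Pi.zero_apply]

@[simp]
lemma ordVec_zero : ordVec (0 : ι → K) = ⊤ :=
  ordVec_eq_top_iff.2 rfl

lemma exists_ordVec_eq_coe {v : ι → K} (hv : v ≠ 0) : ∃ m : ℤ, ordVec v = m :=
  WithTop.ne_top_iff_exists.1 (ordVec_eq_top_iff.not.2 hv) |>.imp fun _ h => h.symm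

lemma ordVec_neg (v : ι → K) : ordVec (-v) = ordVec v := by
  simp [ordVec, ord_neg]

lemma ordVec_sub_comm (v w : ι → K) : ordVec (v - w) = ordVec (w - v) := by
  rw [← ordVec_neg, neg_sub]

lemma le_ordVec_add {v w : ι → K} {c : WithTop ℤ} (hv : c ≤ ordVec v) (hw : c ≤ ordVec w) :
    c ≤ ordVec (v + w) :=
  le_ordVec_iff.2 fun i => le_ord_add (hv.trans (ordVec_le v i)) (hw.trans (ordVec_le w i))

lemma le_ordVec_sub {v w : ι → K} {c : WithTop ℤ} (hv : c ≤ ordVec v) (hw : c ≤ ordVec w) :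
    c ≤ ordVec (v - w) := by
  rw [sub_eq_add_neg]
  exact le_ordVec_add hv (by rwa [ordVec_neg])

lemma ordVec_add_eq_left [Nonempty ι] {v w : ι → K} (h : ordVec v < ordVec w) :
    ordVec (v + w) = ordVec v := by
  refine le_antisymm ?_ (le_ordVec_add le_rfl h.le)
  obtain ⟨i, hi⟩ := exists_ordVec_eq v
  calc ordVec (v + w) ≤ ord (v i + w i) := ordVec_le (v + w) i
    _ = ordVec v := by rw [ord_add_eq_left (hi ▸ h.trans_le (ordVec_le w i)), hi]

lemma ordVec_sub_eq_min [Nonempty ι] {v w : ι → K} (h : ordVec v ≠ ordVec w) :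
    ordVec (v - w) = min (ordVec v) (ordVec w) := by
  rcases h.lt_or_gt with h | h
  · rw [min_eq_left h.le, sub_eq_add_neg, ordVec_add_eq_left (by rwa [ordVec_neg])]
  · rw [min_eq_right h.le, ordVec_sub_comm, sub_eq_add_neg,
      ordVec_add_eq_left (by rwa [ordVec_neg])]

lemma ordVec_eq_of_lt_ordVec_sub [Nonempty ι] {v w : ι → K} (h : ordVec v < ordVec (w - v)) :
    ordVec w = ordVec v := by
  simpa using ordVec_add_eq_left h

lemma ordVec_eq_of_mem_pball [Nonempty ι] {x y : ι → K} {v r : ℤ} (hx : ordVec x = v)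
    (hr : v < r) (hy : y ∈ pball x r) : ordVec y = v := by
  rw [← hx]
  refine ordVec_eq_of_lt_ordVec_sub ?_
  rw [ordVec_sub_comm, hx]
  exact (WithTop.coe_lt_coe.2 hr).trans_le hy

lemma ordVec_smul (c : K) (v : ι → K) : ordVec (c • v) = ord c + ordVec v := by
  rcases isEmpty_or_nonempty ι with hι | hι
  · simp [ordVec]
  refine le_antisymm ?_ (le_ordVec_iff.2 fun i => ?_)
  · obtain ⟨i, hi⟩ := exists_ordVec_eq v
    calc ordVec (c • v) ≤ ord (c * v i) := ordVec_le (c • v) i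
      _ = ord c + ordVec v := by rw [ord_mul, hi]
  · rw [Pi.smul_apply, smul_eq_mul, ord_mul]
    exact add_le_add_right (ordVec_le v i) _

lemma le_ordVec_sub_inv_smul [Nonempty ι] {a : K} {o n : ℤ} (ha : ord a = o) {ξ η : ι → K}
    (h : (n : WithTop ℤ) < ordVec (a • ξ - η)) :
    ((n + 1 - o : ℤ) : WithTop ℤ) ≤ ordVec (ξ - a⁻¹ • η) := by
  have ha0 : a ≠ 0 := fun h0 => by simp [h0, ord_zero] at ha
  rw [← inv_smul_smul₀ ha0 ξ, ← smul_sub, ordVec_smul, ord_inv ha]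
  obtain hw | hw := eq_or_ne (a • ξ - η) 0
  · simp [hw]
  obtain ⟨w, hw⟩ := exists_ordVec_eq_coe hw
  rw [hw, WithTop.coe_lt_coe] at h
  rw [hw, ← WithTop.coe_add, WithTop.coe_le_coe]
  omega

lemma mem_pball {x y : ι → K} {r : ℤ} : y ∈ pball x r ↔ (r : WithTop ℤ) ≤ ordVec (x - y) :=
  Iff.rfl

lemma mem_pball_self (x : ι → K) (r : ℤ) : x ∈ pball x r := by
  simp [mem_pball]

lemma mem_pball_comm {x y : ι → K} {r : ℤ} : y ∈ pball x r ↔ x ∈ pball y r := by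
  rw [mem_pball, mem_pball, ordVec_sub_comm]

lemma pball_subset_pball {x y : ι → K} {r r' : ℤ} (hy : y ∈ pball x r) (hr : r ≤ r') :
    pball y r' ⊆ pball x r := fun z hz => by
  simpa [mem_pball] using le_ordVec_add hy ((WithTop.coe_le_coe.2 hr).trans hz)

lemma add_mem_pball_iff {c x t : ι → K} {r : ℤ} (ht : (r : WithTop ℤ) ≤ ordVec t) :
    x + t ∈ pball c r ↔ x ∈ pball c r := by
  constructor <;> intro h
  · simpa [mem_pball, sub_add_eq_sub_sub] using le_ordVec_add h ht
  · simpa [mem_pball, sub_add_eq_sub_sub] using le_ordVec_sub h ht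

lemma pball_eq_pi (x : ι → K) (r : ℤ) :
    pball x r = Set.univ.pi fun i => {z : K | (r : WithTop ℤ) ≤ ord (x i - z)} := by
  ext y
  simp [mem_pball, le_ordVec_iff]

end Ultrametric

section Topology

open NALocalField

variable {K : Type} [Field K] [TopologicalSpace K] [NALocalField K] {ι : Type} [Fintype ι]

lemma isClopen_setOf_le_ord_sub (c : K) (r : ℤ) : IsClopen {z : K | (r : WithTop ℤ) ≤ ord (c - z)} := by
  have key : ∀ y z : K, (r : WithTop ℤ) ≤ ord (z - y) →
      ((r : WithTop ℤ) ≤ ord (c - z) ↔ (r : WithTop ℤ) ≤ ord (c - y)) := fun y z hzy =>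
    ⟨fun h => by simpa using le_ord_add h hzy, fun h => by simpa using le_ord_sub h hzy⟩
  refine ⟨isOpen_compl_iff.1 ?_, ?_⟩ <;> refine isOpen_iff_mem_nhds.2 fun y hy => ?_ <;>
    filter_upwards [(nhds_basis y).mem_of_mem (i := r) trivial] with z hz
  · exact fun h => hy ((key y z hz).1 h)
  · exact (key y z hz).2 hy

lemma isClopen_pball (x : ι → K) (r : ℤ) : IsClopen (pball x r) := by
  rw [pball_eq_pi]
  exact ⟨isClosed_set_pi fun i _ => (isClopen_setOf_le_ord_sub _ r).isClosed,
    isOpen_set_pi Set.finite_univ fun i _ => (isClopen_setOf_le_ord_sub _ r).isOpen⟩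

lemma pball_mem_nhds (x : ι → K) (r : ℤ) : pball x r ∈ 𝓝 x :=
  (isClopen_pball x r).isOpen.mem_nhds (mem_pball_self x r)

lemma exists_pball_subset {U : Set (ι → K)} {x : ι → K} (hU : U ∈ 𝓝 x) :
    ∃ r : ℤ, pball x r ⊆ U := by
  rw [nhds_pi, Filter.mem_pi'] at hU
  obtain ⟨_, t, ht, htU⟩ := hU
  choose r hr using fun i => (nhds_basis (x i)).mem_iff.1 (ht i)
  obtain ⟨R, hR⟩ := (Set.finite_range r).bddAbove
  refine ⟨R, fun y hy => htU fun i _ => (hr i).2 ?_⟩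
  change (r i : WithTop ℤ) ≤ ord (y i - x i)
  rw [ord_sub_comm]
  exact (WithTop.coe_le_coe.2 (hR (Set.mem_range_self i))).trans
    (le_ordVec_iff.1 (mem_pball.1 hy) i)

lemma exists_pball_prod_subset {W : Set ((ι → K) × (ι → K))} {p : (ι → K) × (ι → K)}
    (hW : W ∈ 𝓝 p) : ∃ r : ℤ, pball p.1 r ×ˢ pball p.2 r ⊆ W := by
  obtain ⟨U, hU, V, hV, hUV⟩ := mem_nhds_prod_iff.1 (Prod.mk.eta (p := p) ▸ hW)
  obtain ⟨r₁, hr₁⟩ := exists_pball_subset hU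
  obtain ⟨r₂, hr₂⟩ := exists_pball_subset hV
  exact ⟨max r₁ r₂, (Set.prod_mono
    ((pball_subset_pball (mem_pball_self _ _) (le_max_left _ _)).trans hr₁)
    ((pball_subset_pball (mem_pball_self _ _) (le_max_right _ _)).trans hr₂)).trans hUV⟩

variable [IsTopologicalRing K]

lemma isCompact_setOf_le_ord_sub (c : K) (r : ℤ) :
    IsCompact {z : K | (r : WithTop ℤ) ≤ ord (c - z)} := by
  convert (isCompact_ball r).image ((continuous_const (y := c)).sub continuous_id) using 1
  ext z
  exact ⟨fun hz => ⟨c - z, hz, sub_sub_cancel _ _⟩, by rintro ⟨w, hw, rfl⟩; simpa using hw⟩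

lemma isCompact_pball (x : ι → K) (r : ℤ) : IsCompact (pball x r) := by
  rw [pball_eq_pi]
  exact isCompact_univ_pi fun i => isCompact_setOf_le_ord_sub _ r

instance : LocallyCompactSpace K :=
  .of_hasBasis nhds_basis fun x m _ => by
    simpa only [ord_sub_comm] using isCompact_setOf_le_ord_sub x m

instance : SigmaCompactSpace K :=
  ⟨⟨fun n => {x | ((-n : ℤ) : WithTop ℤ) ≤ ord x}, fun n => isCompact_ball _,
    Set.eq_univ_of_forall fun x => by
      obtain rfl | hx := eq_or_ne x 0
      · exact Set.mem_iUnion.2 ⟨0, by simp [ord_zero]⟩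
      obtain ⟨m, hm⟩ := exists_ord_eq_coe hx
      exact Set.mem_iUnion.2 ⟨(-m).toNat, by
        change _ ≤ ord x; rw [hm, WithTop.coe_le_coe]; omega⟩⟩⟩

instance : SecondCountableTopology K := by
  let _ : UniformSpace K := IsTopologicalAddGroup.rightUniformSpace K
  have : IsUniformAddGroup K := isUniformAddGroup_of_addCommGroup
  have : (𝓝 (0 : K)).IsCountablyGenerated := (nhds_basis 0).isCountablyGenerated
  have : (uniformity K).IsCountablyGenerated := IsUniformAddGroup.uniformity_countably_generated
  let _ : PseudoMetricSpace K := TopologicalSpace.pseudoMetrizableSpacePseudoMetric K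
  exact EMetric.secondCountable_of_sigmaCompact K

end Topology

section DotChar

variable {R M : Type} [Ring R] [CommMonoid M] {ι : Type} [Fintype ι]

def dotChar (ψ : AddChar R M) (ζ : ι → R) : AddChar (ι → R) M :=
  ψ.compAddMonoidHom (AddMonoidHom.mk' (fun x => ∑ i, x i * ζ i) fun x y => by
    simp [add_mul, Finset.sum_add_distrib])

lemma dotChar_apply (ψ : AddChar R M) (ζ x : ι → R) : dotChar ψ ζ x = ψ (∑ i, x i * ζ i) :=
  rfl

lemma dotChar_add_apply (ψ : AddChar R M) (ζ ζ' x : ι → R) :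
    dotChar ψ (ζ + ζ') x = dotChar ψ ζ x * dotChar ψ ζ' x := by
  simp only [dotChar_apply, Pi.add_apply, mul_add, Finset.sum_add_distrib,
    AddChar.map_add_eq_mul]

lemma dotChar_zero_apply (ψ : AddChar R M) (x : ι → R) : dotChar ψ 0 x = 1 := by
  simp [dotChar_apply]

end DotChar

section StandardChar

open NALocalField

variable {K : Type} [Field K] [TopologicalSpace K] [NALocalField K] {ψ : AddChar K ℂ}

lemma IsStandardChar.isLocallyConstant (hψ : IsStandardChar ψ) : IsLocallyConstant ψ :=
  (IsLocallyConstant.iff_eventually_eq _).2 fun y => by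
    filter_upwards [(nhds_basis y).mem_of_mem (i := 1) trivial] with z hz
    rw [← sub_add_cancel z y, AddChar.map_add_eq_mul, hψ.1 _ hz, one_mul]

/-- The values of `ψ` are roots of unity: the multiples of `x` stay in a compact ball, on which
the locally constant `ψ` takes finitely many values. -/
lemma IsStandardChar.norm_apply (hψ : IsStandardChar ψ) (x : K) : ‖ψ x‖ = 1 := by
  obtain rfl | hx := eq_or_ne x 0
  · simp
  obtain ⟨m, hm⟩ := exists_ord_eq_coe hx
  let B := {z : K | (m : WithTop ℤ) ≤ ord z}
  have : CompactSpace B := isCompact_iff_compactSpace.1 (isCompact_ball m)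
  have hmul (n : ℕ) : n • x ∈ B := by
    change (m : WithTop ℤ) ≤ ord (n • x)
    rw [nsmul_eq_mul, ord_mul, hm]
    exact le_add_of_nonneg_left (ord_natCast_nonneg n)
  obtain ⟨a, b, hab, heq⟩ :=
    (hψ.isLocallyConstant.comp_continuous continuous_subtype_val).range_finite
      |>.exists_lt_map_eq_of_forall_mem (f := fun n : ℕ => ψ x ^ n)
        fun n => Set.mem_range.2 ⟨⟨n • x, hmul n⟩, AddChar.map_nsmul_eq_pow ψ n x⟩
  refine Complex.norm_eq_one_of_pow_eq_one (n := b - a) ?_ (Nat.sub_ne_zero_of_lt hab)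
  refine mul_left_cancel₀ ((ψ.val_isUnit x).pow a).ne_zero ?_
  rw [← pow_add, Nat.add_sub_cancel' hab.le, mul_one, heq]

variable [IsTopologicalRing K]

lemma IsStandardChar.isLocallyConstant_dotChar {ι : Type} [Fintype ι] (hψ : IsStandardChar ψ)
    (ζ : ι → K) : IsLocallyConstant (dotChar ψ ζ) :=
  hψ.isLocallyConstant.comp_continuous <|
    continuous_finsetSum _ fun i _ => (continuous_apply i).mul continuous_const

end StandardChar

section Periodic

open NALocalField

variable {K : Type} [Field K] [TopologicalSpace K] [NALocalField K] {ι : Type} [Fintype ι]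
  {α : Type}

def IsBallPeriodic (R : ℤ) (f : (ι → K) → α) : Prop :=
  ∀ x t, (R : WithTop ℤ) ≤ ordVec t → f (x + t) = f x

lemma IsBallPeriodic.indicator [Zero α] {R : ℤ} {f : (ι → K) → α} (hf : IsBallPeriodic R f)
    (c : ι → K) (r : ℤ) : IsBallPeriodic (max R r) ((pball c r).indicator f) := fun x t ht => by
  simp only [Set.indicator_apply,
    add_mem_pball_iff ((WithTop.coe_le_coe.2 (le_max_right R r)).trans ht),
    hf x t ((WithTop.coe_le_coe.2 (le_max_left R r)).trans ht)]

lemma exists_isBallPeriodic [Zero α] {f : (ι → K) → α} (hf : IsLocallyConstant f)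
    (hc : HasCompactSupport f) : ∃ R : ℤ, IsBallPeriodic R f := by
  choose rad hrad using fun x => exists_pball_subset (hf.eventually_eq x)
  obtain ⟨s, hs⟩ := hc.elim_finite_subcover (fun x => pball x (rad x))
    (fun x => (isClopen_pball x _).isOpen) fun x _ => Set.mem_iUnion.2 ⟨x, mem_pball_self x _⟩
  obtain ⟨R, hR⟩ := (s.finite_toSet.image rad).bddAbove
  have key : ∀ x t, (R : WithTop ℤ) ≤ ordVec t → x ∈ tsupport f → f (x + t) = f x := by
    intro x t ht hx
    obtain ⟨c, hcs, hxc⟩ := Set.mem_iUnion₂.1 (hs hx)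
    have hct : (rad c : WithTop ℤ) ≤ ordVec t :=
      (WithTop.coe_le_coe.2 (hR (Set.mem_image_of_mem rad hcs))).trans ht
    rw [hrad c ((add_mem_pball_iff hct).2 hxc), hrad c hxc]
  refine ⟨R, fun x t ht => ?_⟩
  by_cases hx : x ∈ tsupport f
  · exact key x t ht hx
  by_cases hxt : x + t ∈ tsupport f
  · simpa using (key (x + t) (-t) (by rwa [ordVec_neg]) hxt).symm
  · rw [image_eq_zero_of_notMem_tsupport hx, image_eq_zero_of_notMem_tsupport hxt]

end Periodic

section Integral

open MeasureTheory NALocalField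

/-- Translating by a period `t` multiplies the integral by `χ t ≠ 1`. -/
lemma integral_mul_addChar_eq_zero {G : Type} [AddGroup G] [MeasurableSpace G] [MeasurableAdd G]
    (μ : Measure G) [μ.IsAddRightInvariant] (χ : AddChar G ℂ) {h : G → ℂ} {t : G}
    (hh : ∀ x, h (x + t) = h x) (hχ : χ t ≠ 1) : ∫ x, h x * χ x ∂μ = 0 := by
  have key : ∫ x, h x * χ x ∂μ = χ t * ∫ x, h x * χ x ∂μ := by
    conv_lhs => rw [← integral_add_right_eq_self _ t]
    rw [← integral_const_mul]
    congr 1 with x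
    rw [hh, AddChar.map_add_eq_mul]
    ring
  have : (1 - χ t) * ∫ x, h x * χ x ∂μ = 0 := by linear_combination key
  exact (mul_eq_zero.1 this).resolve_left (sub_ne_zero.2 hχ.symm)

variable {K : Type} [Field K] [TopologicalSpace K] [NALocalField K] {ι : Type} [Fintype ι]
  [Nonempty ι] [MeasurableSpace (ι → K)] [MeasurableAdd (ι → K)] {ψ : AddChar K ℂ}

lemma IsStandardChar.integral_mul_dotChar_eq_zero (hψ : IsStandardChar ψ) (μ : Measure (ι → K))
    [μ.IsAddRightInvariant] {R : ℤ} {h : (ι → K) → ℂ} (hh : IsBallPeriodic R h) {ζ : ι → K}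
    (hζ : ordVec ζ ≤ ((-R : ℤ) : WithTop ℤ)) : ∫ x, h x * dotChar ψ ζ x ∂μ = 0 := by
  obtain ⟨x₀, hx₀, hψx₀⟩ := hψ.2
  obtain ⟨i, hi⟩ := exists_ordVec_eq ζ
  have hζi : ζ i ≠ 0 := fun h0 => by simp [hi, h0, ord_zero] at hζ
  have hx₀0 : x₀ ≠ 0 := by rintro rfl; simp at hψx₀
  obtain ⟨w, hw⟩ := exists_ord_eq_coe hζi
  obtain ⟨a, ha⟩ := exists_ord_eq_coe (div_ne_zero hx₀0 hζi)
  have hord : ord x₀ = (a + w : ℤ) := by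
    rw [← div_mul_cancel₀ x₀ hζi, ord_mul, ha, hw, WithTop.coe_add]
  rw [hord, WithTop.coe_nonneg] at hx₀
  rw [hi, hw, WithTop.coe_le_coe] at hζ
  refine integral_mul_addChar_eq_zero μ _ (t := Pi.single i (x₀ / ζ i)) (fun x => hh x _ ?_) ?_
  · refine le_ordVec_iff.2 fun j => ?_
    rcases eq_or_ne j i with rfl | hj
    · rw [Pi.single_eq_same, ha, WithTop.coe_le_coe]
      omega
    · simp [Pi.single_eq_of_ne hj, ord_zero]
  · rwa [dotChar_apply, Fintype.sum_eq_single i fun j hj => by simp [Pi.single_eq_of_ne hj],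
      Pi.single_eq_same, div_mul_cancel₀ x₀ hζi]

end Integral

section Average

open MeasureTheory

variable {α E : Type} [MeasurableSpace α] [NormedAddCommGroup E] [NormedSpace ℝ E]
  {μ : Measure α} {s : Set α} {f g : α → E}

lemma norm_setAverage_le_of_norm_le (hs : μ s ≠ ⊤) {C : ℝ} (hC : 0 ≤ C)
    (hf : ∀ x ∈ s, ‖f x‖ ≤ C) : ‖⨍ x in s, f x ∂μ‖ ≤ C := by
  rw [setAverage_eq, norm_smul, norm_inv, Real.norm_of_nonneg measureReal_nonneg]
  rcases eq_or_ne (μ.real s) 0 with h0 | h0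
  · simpa [h0] using hC
  calc (μ.real s)⁻¹ * ‖∫ x in s, f x ∂μ‖ ≤ (μ.real s)⁻¹ * (C * μ.real s) := by
        gcongr
        exact norm_setIntegral_le_of_norm_le_const hs.lt_top hf
    _ = C := by field_simp

lemma setAverage_add (hf : IntegrableOn f s μ) (hg : IntegrableOn g s μ) :
    ⨍ x in s, (f x + g x) ∂μ = ⨍ x in s, f x ∂μ + ⨍ x in s, g x ∂μ := by
  simp only [setAverage_eq, integral_add hf hg, smul_add]

lemma setAverage_const_mul (c : ℂ) (f : α → ℂ) :
    ⨍ x in s, c * f x ∂μ = c * ⨍ x in s, f x ∂μ := by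
  simp only [setAverage_eq, integral_const_mul, mul_smul_comm]

end Average

section WaveSeries

open MeasureTheory NALocalField

variable {K : Type} [Field K] [TopologicalSpace K] [IsTopologicalRing K] [NALocalField K]

instance : MeasurableSpace K := borel K

instance : BorelSpace K := ⟨rfl⟩

variable {ι : Type} [Fintype ι] {ψ : AddChar K ℂ}

variable (ψ) in
def waveSeries (c η : ℕ → ι → K) (f : (ι → K) → ℂ) : ℂ :=
  ∑' k, (2⁻¹ : ℂ) ^ k * ⨍ x in pball (c k) k, f x * dotChar ψ (-η k) x ∂Measure.addHaar

lemma addHaar_pball_ne_zero (c : ι → K) (r : ℤ) : Measure.addHaar (pball c r) ≠ 0 :=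
  ((isClopen_pball c r).isOpen.measure_pos _ ⟨c, mem_pball_self c r⟩).ne'

lemma addHaar_pball_ne_top (c : ι → K) (r : ℤ) : Measure.addHaar (pball c r) ≠ ⊤ :=
  (isCompact_pball c r).measure_ne_top

lemma IsStandardChar.integrableOn_mul_dotChar (hψ : IsStandardChar ψ) {f : (ι → K) → ℂ}
    (hf : IsLocallyConstant f) (hc : HasCompactSupport f) (ζ : ι → K) (s : Set (ι → K)) :
    IntegrableOn (fun x => f x * dotChar ψ ζ x) s Measure.addHaar :=
  (hf.continuous.mul (hψ.isLocallyConstant_dotChar ζ).continuous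
    |>.integrable_of_hasCompactSupport hc.mul_right).integrableOn

lemma IsStandardChar.summable_waveSeries (hψ : IsStandardChar ψ) (c η : ℕ → ι → K)
    {f : (ι → K) → ℂ} (hf : IsLocallyConstant f) (hc : HasCompactSupport f) :
    Summable fun k : ℕ => (2⁻¹ : ℂ) ^ k *
      ⨍ x in pball (c k) k, f x * dotChar ψ (-η k) x ∂Measure.addHaar := by
  obtain ⟨C, hC⟩ := hc.exists_bound_of_continuous hf.continuous
  have hC0 : 0 ≤ C := (norm_nonneg _).trans (hC 0)
  refine Summable.of_norm_bounded (summable_geometric_two.mul_left C) fun k => ?_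
  rw [norm_mul, norm_pow, norm_inv, Complex.norm_two, mul_comm, ← one_div]
  gcongr
  refine norm_setAverage_le_of_norm_le (addHaar_pball_ne_top _ _) hC0 fun x _ => ?_
  rw [norm_mul, dotChar_apply, hψ.norm_apply, mul_one]
  exact hC x

lemma IsStandardChar.isDistributionOn_waveSeries (hψ : IsStandardChar ψ) (c η : ℕ → ι → K) :
    IsDistributionOn Set.univ (waveSeries ψ c η) := by
  refine ⟨fun a f _ => ?_, fun f g hf hg => ?_⟩
  · simp only [waveSeries, Pi.smul_apply, smul_eq_mul, mul_assoc, setAverage_const_mul,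
      mul_left_comm _ a, tsum_mul_left]
  · simp only [waveSeries, Pi.add_apply, add_mul]
    rw [← (hψ.summable_waveSeries c η hf.1 hf.2.1).tsum_add
      (hψ.summable_waveSeries c η hg.1 hg.2.1)]
    congr 1 with k
    rw [setAverage_add (hψ.integrableOn_mul_dotChar hf.1 hf.2.1 _ _)
      (hψ.integrableOn_mul_dotChar hg.1 hg.2.1 _ _), mul_add]

lemma fTrans_waveSeries (c η : ℕ → ι → K) (φ : (ι → K) → ℂ) (ξ : ι → K) :
    FTrans ψ (waveSeries ψ c η) φ ξ = ∑' k, (2⁻¹ : ℂ) ^ k *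
      ⨍ x in pball (c k) k, φ x * dotChar ψ (ξ - η k) x ∂Measure.addHaar := by
  simp only [FTrans, waveSeries, sub_eq_add_neg, dotChar_add_apply, ← dotChar_apply, mul_assoc]

lemma IsStandardChar.setAverage_mul_dotChar_eq_zero [Nonempty ι] (hψ : IsStandardChar ψ)
    {R : ℤ} {φ : (ι → K) → ℂ} (hφ : IsBallPeriodic R φ) (c : ι → K) (r : ℤ) {ζ : ι → K}
    (h : ordVec ζ ≤ ((-max R r : ℤ) : WithTop ℤ) ∨ ∀ x ∈ pball c r, φ x = 0) :
    ⨍ x in pball c r, φ x * dotChar ψ ζ x ∂Measure.addHaar = 0 := by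
  obtain h | h := h
  · rw [setAverage_eq, ← integral_indicator (isClopen_pball c r).isOpen.measurableSet]
    simp only [Set.indicator_mul_left]
    rw [hψ.integral_mul_dotChar_eq_zero _ (hφ.indicator c r) h, smul_zero]
  · rw [setAverage_congr_fun (isClopen_pball c r).isOpen.measurableSet
      (Filter.Eventually.of_forall fun x hx => by rw [h x hx, zero_mul])]
    simp

lemma setAverage_mul_dotChar_zero_eq_one {φ : (ι → K) → ℂ} {c : ι → K} {r : ℤ}
    (hφ : ∀ x ∈ pball c r, φ x = 1) :
    ⨍ x in pball c r, φ x * dotChar ψ 0 x ∂Measure.addHaar = 1 := by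
  rw [setAverage_congr_fun (isClopen_pball c r).isOpen.measurableSet
    (Filter.Eventually.of_forall fun x hx => by rw [hφ x hx, dotChar_zero_apply, one_mul]),
    setAverage_const (addHaar_pball_ne_zero c r) (addHaar_pball_ne_top c r)]

end WaveSeries

section TestFunction

variable {K : Type} [Field K] [TopologicalSpace K] [NALocalField K] {ι : Type} [Fintype ι]

lemma tsupport_indicator_pball_subset (c : ι → K) (r : ℤ) :
    tsupport ((pball c r).indicator fun _ => (1 : ℂ)) ⊆ pball c r :=
  closure_minimal Set.support_indicator_subset (isClopen_pball c r).isClosed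

lemma isBallPeriodic_indicator_pball (c : ι → K) (r : ℤ) :
    IsBallPeriodic r ((pball c r).indicator fun _ => (1 : ℂ)) := by
  simpa using IsBallPeriodic.indicator (f := fun _ => (1 : ℂ)) (R := r) (fun _ _ _ => rfl) c r

variable [IsTopologicalRing K]

lemma isSBOn_indicator_pball (c : ι → K) (r : ℤ) :
    IsSBOn Set.univ ((pball c r).indicator fun _ => (1 : ℂ)) :=
  ⟨(LocallyConstant.indicator (LocallyConstant.const _ 1) (isClopen_pball c r)).isLocallyConstant,
    (isCompact_pball c r).of_isClosed_subset (isClosed_tsupport _)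
      (tsupport_indicator_pball_subset c r),
    Set.subset_univ _⟩

end TestFunction

section WaveFront

open MeasureTheory NALocalField Filter

variable {K : Type} [Field K] [TopologicalSpace K] [IsTopologicalRing K] [NALocalField K]
  {ι : Type} [Fintype ι] [Nonempty ι] {ψ : AddChar K ℂ}
  {q : ℕ → (ι → K) × (ι → K)} {lam : ℕ → K} {m : ℕ → ℤ}

/-- At the frequency `λⱼξⱼ` only the `j`-th term survives, because the valuations of the
frequencies `λₖξₖ` are distinct. -/
lemma IsStandardChar.fTrans_waveSeries_indicator_pball (hψ : IsStandardChar ψ)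
    (hm : ∀ k, ordVec (lam k • (q k).2) = m k) (hanti : StrictAnti m)
    (hm2 : ∀ k, m k ≤ -(2 * k)) {c : ι → K} {r : ℤ} {j : ℕ} (hj : r ≤ j)
    (hcj : (q j).1 ∈ pball c r) :
    FTrans ψ (waveSeries ψ (fun k => (q k).1) fun k => lam k • (q k).2)
      ((pball c r).indicator fun _ => 1) (lam j • (q j).2) = 2⁻¹ ^ j := by
  rw [fTrans_waveSeries, tsum_eq_single j, sub_self, setAverage_mul_dotChar_zero_eq_one
    fun x hx => Set.indicator_of_mem (pball_subset_pball hcj hj hx) _, mul_one]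
  intro k hk
  rw [hψ.setAverage_mul_dotChar_eq_zero (isBallPeriodic_indicator_pball c r) _ _ (.inl ?_),
    mul_zero]
  rw [ordVec_sub_eq_min (by rw [hm, hm]; exact_mod_cast hanti.injective.ne hk.symm), hm, hm,
    ← WithTop.coe_min, WithTop.coe_le_coe]
  have := hm2 j
  have := hm2 k
  omega

lemma IsStandardChar.not_lamSmoothAt_waveSeries (hψ : IsStandardChar ψ) {Λ : Set K}
    (hlam : ∀ k, lam k ∈ Λ) (hm : ∀ k, ordVec (lam k • (q k).2) = m k) (hanti : StrictAnti m)
    (hm2 : ∀ k, m k ≤ -(2 * k)) {p : (ι → K) × (ι → K)} (hp : p.2 ≠ 0)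
    (hpq : MapClusterPt p atTop q) :
    ¬ LamSmoothAt ψ Λ Set.univ
      (waveSeries ψ (fun k => (q k).1) fun k => lam k • (q k).2) p.1 p.2 := by
  rintro ⟨U₀, V₀, hU₀, hV₀, hxU, hξV, hsmooth⟩
  obtain ⟨r, hr⟩ := exists_pball_subset (hU₀.mem_nhds hxU)
  obtain ⟨rV, hrV⟩ := exists_pball_subset (hV₀.mem_nhds hξV)
  obtain ⟨v, hv⟩ := exists_ordVec_eq_coe hp
  obtain ⟨N, hN⟩ := hsmooth _ (isSBOn_indicator_pball p.1 r)
    ((tsupport_indicator_pball_subset p.1 r).trans hr)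
  obtain ⟨j, hj, hj1, hj2⟩ : ∃ j : ℕ, max r (1 - v - N) ≤ j ∧ (q j).1 ∈ pball p.1 r ∧
      (q j).2 ∈ pball p.2 (max rV (v + 1)) := by
    obtain ⟨j, ⟨hj1, hj2⟩, hj⟩ := (mapClusterPt_iff_frequently.1 hpq _
      (prod_mem_nhds (pball_mem_nhds p.1 r) (pball_mem_nhds p.2 (max rV (v + 1))))).and_eventually
      (eventually_ge_atTop (max r (1 - v - N)).toNat) |>.exists
    exact ⟨j, by omega, hj1, hj2⟩
  obtain ⟨o, ho⟩ := exists_ord_eq_coe fun h : lam j = 0 => by simpa [h] using hm j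
  have hoj : o + v = m j := by
    have := hm j
    rwa [ordVec_smul, ho, ordVec_eq_of_mem_pball hv (by omega) hj2, ← WithTop.coe_add,
      WithTop.coe_inj] at this
  have hzero := hN (lam j) (hlam j) (by rw [ho, WithTop.coe_lt_coe]; have := hm2 j; omega)
    (q j).2 (hrV (pball_subset_pball (mem_pball_self p.2 rV) (le_max_left _ _) hj2))
  change FTrans ψ _ _ (lam j • (q j).2) = 0 at hzero
  rw [hψ.fTrans_waveSeries_indicator_pball hm hanti hm2 (by omega) hj1] at hzero
  exact pow_ne_zero j (by norm_num) hzero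

/-- A term of `F(φu)(λξ)` survives only if `ord(λξ) = mₖ` and `B(xₖ, k)` meets the support of
`φ`; when `ord λ` is very negative this forces `k` to be large, and then `(xₖ, (λₖ/λ)ξₖ)` lies
in the neighbourhood of `p` that the cone avoids. -/
lemma IsStandardChar.lamSmoothAt_waveSeries (hψ : IsStandardChar ψ) {Λ : Set K}
    (hΛ : IsOpenFinIndexSubgroup Λ) (hlam : ∀ k, lam k ∈ Λ)
    (hm : ∀ k, ordVec (lam k • (q k).2) = m k) (hanti : StrictAnti m)
    (hm2 : ∀ k, m k ≤ -(2 * k)) {p : (ι → K) × (ι → K)} (hp : p.2 ≠ 0) {r₀ : ℤ}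
    (hr₀ : ∀ k, ∀ μ ∈ Λ, ((q k).1, μ • (q k).2) ∉ pball p.1 r₀ ×ˢ pball p.2 r₀) :
    LamSmoothAt ψ Λ Set.univ
      (waveSeries ψ (fun k => (q k).1) fun k => lam k • (q k).2) p.1 p.2 := by
  obtain ⟨v, hv⟩ := exists_ordVec_eq_coe hp
  set rV := max r₀ (v + 1)
  refine ⟨pball p.1 r₀, pball p.2 rV, (isClopen_pball _ _).isOpen, (isClopen_pball _ _).isOpen,
    mem_pball_self _ _, mem_pball_self _ _, fun φ hφ hφU => ?_⟩
  obtain ⟨R, hR⟩ := exists_isBallPeriodic hφ.1 hφ.2.1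
  set k₀ : ℕ := (max r₀ (rV - v)).toNat
  refine ⟨min (m k₀ - v) (-R - rV), fun lam' hlam' hlt ξ hξ => ?_⟩
  have hlam'0 := hΛ.ne_zero lam' hlam'
  obtain ⟨o, ho⟩ := exists_ord_eq_coe hlam'0
  rw [ho, WithTop.coe_lt_coe] at hlt
  have hξv : ordVec ξ = v := ordVec_eq_of_mem_pball hv (by omega) hξ
  have hlξ : ordVec (lam' • ξ) = (o + v : ℤ) := by rw [ordVec_smul, ho, hξv, WithTop.coe_add]
  change FTrans ψ _ _ (lam' • ξ) = 0
  rw [fTrans_waveSeries]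
  refine (tsum_congr fun k => ?_).trans tsum_zero
  rw [hψ.setAverage_mul_dotChar_eq_zero hR, mul_zero]
  by_contra! hk
  obtain ⟨hk, x, hxk, hφx⟩ := hk
  have hres : o + v = m k := by
    by_contra hne
    rw [ordVec_sub_eq_min (by rw [hlξ, hm]; exact_mod_cast hne), hlξ, hm, ← WithTop.coe_min,
      WithTop.coe_lt_coe] at hk
    have := hm2 k
    omega
  have hkk₀ : k₀ < k := hanti.lt_iff_gt.1 (by omega)
  have hq1 : (q k).1 ∈ pball p.1 r₀ :=
    pball_subset_pball (hφU (subset_tsupport φ hφx)) (by omega) (mem_pball_comm.1 hxk)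
  have hq2 : (lam'⁻¹ * lam k) • (q k).2 ∈ pball p.2 r₀ := by
    refine pball_subset_pball (mem_pball_self _ _) (le_max_left r₀ (v + 1))
      (pball_subset_pball hξ le_rfl (mem_pball.2 ?_))
    rw [mul_smul]
    refine le_trans (WithTop.coe_le_coe.2 ?_) (le_ordVec_sub_inv_smul ho hk)
    have := hm2 k
    omega
  exact hr₀ k _ (hΛ.mul_mem _ (hΛ.inv_mem _ hlam') _ (hlam k)) ⟨hq1, hq2⟩

end WaveFront

lemma exists_seq_forall_mapClusterPt {X : Type} [TopologicalSpace X] [SecondCountableTopology X]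
    {S : Set X} (hS : S.Nonempty) :
    ∃ q : ℕ → X, (∀ j, q j ∈ S) ∧ ∀ p ∈ S, MapClusterPt p Filter.atTop q := by
  have := hS.to_subtype
  obtain ⟨d, hd⟩ := TopologicalSpace.exists_dense_seq S
  refine ⟨fun j => d j.unpair.1, fun j => (d _).2, fun p hp => ?_⟩
  refine mapClusterPt_iff_frequently.2 fun W hW => Filter.frequently_atTop.2 fun n => ?_
  obtain ⟨U, hUW, hU, hpU⟩ := mem_nhds_iff.1 hW
  obtain ⟨a, ha⟩ := hd.exists_mem_open (hU.preimage continuous_subtype_val) ⟨⟨p, hp⟩, hpU⟩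
  exact ⟨Nat.pair a n, Nat.right_le_pair a n, by simpa using hUW ha⟩

namespace IsOpenFinIndexSubgroup

open NALocalField

variable {K : Type} [Field K] [TopologicalSpace K] [NALocalField K] {Λ : Set K}

/-- The values of `ord` on `Λ` have bounded gaps, since `ord` is bounded on a finite set of
coset representatives. -/
lemma exists_ord_mem_Icc (hΛ : IsOpenFinIndexSubgroup Λ) :
    ∃ C : ℕ, ∀ b : ℤ, ∃ l ∈ Λ, ∃ o : ℤ, ord l = o ∧ b - C ≤ o ∧ o ≤ b := by
  obtain ⟨T, hT⟩ := hΛ.finiteIndex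
  obtain ⟨hi, hhi⟩ := (T.finite_toSet.image fun t => (ord t).untopD 0).bddAbove
  obtain ⟨lo, hlo⟩ := (T.finite_toSet.image fun t => (ord t).untopD 0).bddBelow
  refine ⟨(hi - lo).toNat, fun b => ?_⟩
  obtain ⟨x, hx⟩ := ord_surjective (K := K) (b - hi)
  have hx0 : x ≠ 0 := by
    rintro rfl
    exact WithTop.top_ne_coe (ord_zero.symm.trans hx)
  obtain ⟨t, htT, htx⟩ := hT x hx0
  have ht0 : t ≠ 0 := fun h => hΛ.ne_zero _ htx (by simp [h])
  obtain ⟨n, hn⟩ := exists_ord_eq_coe ht0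
  have hnhi : n ≤ hi := by simpa [hn] using hhi (Set.mem_image_of_mem _ htT)
  have hnlo : lo ≤ n := by simpa [hn] using hlo (Set.mem_image_of_mem _ htT)
  exact ⟨t * x, htx, n + (b - hi), by rw [ord_mul, hn, hx, WithTop.coe_add], by omega, by omega⟩

lemma exists_strictAnti_ordVec_smul {ι : Type} [Fintype ι] (hΛ : IsOpenFinIndexSubgroup Λ)
    {ξ : ℕ → ι → K} (hξ : ∀ k, ξ k ≠ 0) :
    ∃ (lam : ℕ → K) (m : ℕ → ℤ), (∀ k, lam k ∈ Λ) ∧ (∀ k, ordVec (lam k • ξ k) = m k) ∧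
      StrictAnti m ∧ ∀ k, m k ≤ -(2 * k) := by
  obtain ⟨C, hC⟩ := hΛ.exists_ord_mem_Icc
  choose v hv using fun k => exists_ordVec_eq_coe (hξ k)
  choose lam hlam o ho hlo hhi using fun k : ℕ => hC (-((C + 2) * k) - v k)
  have hm : ∀ k, ordVec (lam k • ξ k) = (o k + v k : ℤ) := fun k => by
    rw [ordVec_smul, ho, hv, WithTop.coe_add]
  -- `o k + v k` lies in `[-(C + 2) k - C, -(C + 2) k]`, and these windows are disjoint.
  refine ⟨lam, fun k => o k + v k, hlam, hm, strictAnti_nat_of_succ_lt fun k => ?_, fun k => ?_⟩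
  · have h1 := hhi (k + 1)
    have h2 := hlo k
    push_cast at h1 h2 ⊢
    nlinarith
  · have := hhi k
    nlinarith

end IsOpenFinIndexSubgroup

theorem exists_distribution_with_prescribed_waveFront_general {K : Type} [Field K]
    [TopologicalSpace K] [IsTopologicalRing K] [NALocalField K]
    (ψ : AddChar K ℂ) (hψ : IsStandardChar ψ)
    (Λ : Set K) (hΛ : IsOpenFinIndexSubgroup Λ)
    {d : ℕ}
    (S : Set ((Fin d → K) × (Fin d → K)))
    (hSclosed : ∃ F : Set ((Fin d → K) × (Fin d → K)), IsClosed F ∧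
        S = F ∩ {p | p.2 ≠ (0 : Fin d → K)})
    (hScone : ∀ p ∈ S, ∀ lam ∈ Λ, (p.1, fun i => lam * p.2 i) ∈ S) :
    ∃ u : ((Fin d → K) → ℂ) → ℂ,
      IsDistributionOn (Set.univ : Set (Fin d → K)) u ∧
      WFset ψ Λ (Set.univ : Set (Fin d → K)) u = S := by
  obtain ⟨F, hF, rfl⟩ := hSclosed
  rcases (F ∩ {p | p.2 ≠ 0}).eq_empty_or_nonempty with hS | hS
  · refine ⟨fun _ => 0, ⟨fun _ _ _ => by simp, fun _ _ _ _ => by simp⟩, ?_⟩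
    rw [hS, Set.eq_empty_iff_forall_notMem]
    exact fun p ⟨_, _, hns⟩ => hns ⟨Set.univ, Set.univ, isOpen_univ, isOpen_univ, trivial, trivial,
      fun _ _ _ => ⟨0, fun _ _ _ _ _ => rfl⟩⟩
  have : Nonempty (Fin d) := by
    obtain ⟨p, -, hp⟩ := hS
    by_contra h
    exact hp (funext fun i => (h ⟨i⟩).elim)
  obtain ⟨q, hqS, hq⟩ := exists_seq_forall_mapClusterPt hS
  obtain ⟨lam, m, hlam, hm, hanti, hm2⟩ := hΛ.exists_strictAnti_ordVec_smul fun k => (hqS k).2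
  refine ⟨_, hψ.isDistributionOn_waveSeries _ _, Set.ext fun p => ⟨fun ⟨_, hp, hns⟩ => ?_,
    fun hpS => ⟨trivial, hpS.2, hψ.not_lamSmoothAt_waveSeries hlam hm hanti hm2 hpS.2 (hq p hpS)⟩⟩⟩
  by_contra hpS
  obtain ⟨r₀, hr₀⟩ := exists_pball_prod_subset (hF.isOpen_compl.mem_nhds fun hpF => hpS ⟨hpF, hp⟩)
  exact hns (hψ.lamSmoothAt_waveSeries hΛ hlam hm hanti hm2 hp
    fun k μ hμ hmem => hr₀ hmem (hScone _ (hqS k) μ hμ).1)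

/-- Let `Λ` be an open subgroup of finite index of `(K^×, ×)`, `d ≥ 1`,
and let `S` be a closed subset of `K^d × (K^d ∖ {0})` which is `Λ`-conical in the second
factor. Then there exists a distribution `u ∈ S'(K^d)` with `WF_Λ(u) = S`. -/
theorem exists_distribution_with_prescribed_waveFront {K : Type} [Field K]
    [TopologicalSpace K] [IsTopologicalRing K] [NALocalField K]
    (ψ : AddChar K ℂ) (hψ : IsStandardChar ψ)
    (Λ : Set K) (hΛ : IsOpenFinIndexSubgroup Λ)
    {d : ℕ} (hd : 1 ≤ d)
    (S : Set ((Fin d → K) × (Fin d → K)))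
    (hSne : ∀ p ∈ S, p.2 ≠ (0 : Fin d → K))
    (hSclosed : ∃ F : Set ((Fin d → K) × (Fin d → K)), IsClosed F ∧
        S = F ∩ {p | p.2 ≠ (0 : Fin d → K)})
    (hScone : ∀ p ∈ S, ∀ lam ∈ Λ, (p.1, fun i => lam * p.2 i) ∈ S) :
    ∃ u : ((Fin d → K) → ℂ) → ℂ,
      IsDistributionOn (Set.univ : Set (Fin d → K)) u ∧
      WFset ψ Λ (Set.univ : Set (Fin d → K)) u = S :=
  exists_distribution_with_prescribed_waveFront_general ψ hψ Λ hΛ S hSclosed hScone
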